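/- arXiv:1809.04410 — 5 statements merged into one kernel-verified Lean document; each statement's English description precedes it below -/
import Mathlib

section
/- Assume γ = 0, ξ = 0, α + ε + μ ≠ 0 and δ + σ + μ ≠ 0. Then a point of the form (x₁, 0, x₃) satisfies F(x₁, 0, x₃) = 0 if and only if x₃ = 0 and x₁ = (ε+μ)/(α+ε+μ). In other words, the addiction-free equilibrium is the unique equilibrium of the model with no addicted individuals. -/
open Matrix

/-- The prescription opioid epidemic vector field `F : ℝ³ → ℝ³`, where
`z = 1 - x₁ - x₂ - x₃`. -/
def opioidField (α β ξ ε δ μ μs γ ζ ν σ : ℝ) (x : Fin 3 → ℝ) : Fin 3 → ℝ :=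
  ![-α * x 0 - β * (1 - ξ) * x 0 * x 1 - β * ξ * x 0 * (1 - x 0 - x 1 - x 2)
      + (ε + μ) * (1 - x 0 - x 1 - x 2) + (δ + μ) * x 2 + μs * x 1,
    γ * (1 - x 0 - x 1 - x 2) + σ * x 2 + β * (1 - ξ) * x 0 * x 1
      + β * ξ * x 0 * (1 - x 0 - x 1 - x 2) + ν * x 2 * x 1 - (ζ + μs) * x 1,
    ζ * x 1 - μ * x 2 * x 1 - (δ + σ + μ) * x 2]

theorem opioidField_eq_of_no_addicted (α β ε δ μ μs ζ ν σ x₁ x₃ : ℝ) :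
    opioidField α β 0 ε δ μ μs 0 ζ ν σ ![x₁, 0, x₃] =
      ![(ε + μ) - (α + ε + μ) * x₁ + (δ - ε) * x₃, σ * x₃, -((δ + σ + μ) * x₃)] := by
  ext i
  fin_cases i <;> simp [opioidField]
  all_goals ring

/-- if `γ = 0`, `ξ = 0`, `α + ε + μ ≠ 0` and `δ + σ + μ ≠ 0`, then a point
`(x₁, 0, x₃)` is an equilibrium of the model iff `x₃ = 0` and `x₁ = (ε+μ)/(α+ε+μ)`;
i.e. the addiction-free equilibrium is the unique equilibrium with no addicted individuals. -/
theorem addiction_free_equilibrium_unique (α β ξ ε δ μ μs γ ζ ν σ : ℝ)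
    (hγ : γ = 0) (hξ : ξ = 0) (h : α + ε + μ ≠ 0) (h' : δ + σ + μ ≠ 0)
    (x₁ x₃ : ℝ) :
    opioidField α β ξ ε δ μ μs γ ζ ν σ ![x₁, 0, x₃] = 0 ↔
      x₃ = 0 ∧ x₁ = (ε + μ) / (α + ε + μ) := by
  subst hγ hξ
  rw [opioidField_eq_of_no_addicted, cons_eq_zero_iff, cons_eq_zero_iff, cons_eq_zero_iff,
    neg_eq_zero, mul_eq_zero_iff_left h', eq_div_iff h]
  constructor
  · rintro ⟨hx₁, -, rfl, -⟩
    exact ⟨rfl, by linear_combination -hx₁⟩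
  · rintro ⟨rfl, hx₁⟩
    exact ⟨by linear_combination -hx₁, mul_zero σ, rfl, zero_empty.symm⟩
end

section
/- Assume γ = 0, ξ = 0 and α + ε + μ ≠ 0. Then the map F : ℝ³ → ℝ³ is differentiable at the addiction-free equilibrium x* = ((ε+μ)/(α+ε+μ), 0, 0), and its Jacobian matrix at x* equals the 3×3 matrix with rows ( -(α+ε+μ), -β(ε+μ)/(α+ε+μ) - (ε+μ) + μ*, δ - ε ), ( 0, β(ε+μ)/(α+ε+μ) - (ζ+μ*), σ ), ( 0, ζ, -(δ+σ+μ) ). In particular, the entries (2,1) and (3,1) of the Jacobian vanish. -/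
open Matrix

/-- The Jacobian matrix of the opioid model at the addiction-free equilibrium
(for `γ = ξ = 0`). -/
noncomputable def opioidJacobian (α β ε δ μ μs ζ σ : ℝ) : Matrix (Fin 3) (Fin 3) ℝ :=
  !![-(α + ε + μ), -(β * (ε + μ) / (α + ε + μ)) - (ε + μ) + μs, δ - ε;
     0, β * (ε + μ) / (α + ε + μ) - (ζ + μs), σ;
     0, ζ, -(δ + σ + μ)]

section OpioidField

variable (α β ξ ε δ μ μs γ ζ ν σ : ℝ) (x : Fin 3 → ℝ)

def opioidFieldJacobian : Matrix (Fin 3) (Fin 3) ℝ :=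
  let z := 1 - x 0 - x 1 - x 2
  !![-α - β * (1 - ξ) * x 1 - β * ξ * (z - x 0) - (ε + μ),
      -β * (1 - ξ) * x 0 + β * ξ * x 0 - (ε + μ) + μs,
      β * ξ * x 0 - (ε + μ) + (δ + μ);
    -γ + β * (1 - ξ) * x 1 + β * ξ * (z - x 0),
      -γ + β * (1 - ξ) * x 0 - β * ξ * x 0 + ν * x 2 - (ζ + μs),
      -γ + σ - β * ξ * x 0 + ν * x 1;
    0, ζ - μ * x 2, -μ * x 1 - (δ + σ + μ)]

theorem hasFDerivAt_opioidField :
    HasFDerivAt (opioidField α β ξ ε δ μ μs γ ζ ν σ)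
      (Matrix.toLin' (opioidFieldJacobian α β ξ ε δ μ μs γ ζ ν σ x)).toContinuousLinearMap x := by
  have h0 := hasFDerivAt_apply (𝕜 := ℝ) 0 x
  have h1 := hasFDerivAt_apply (𝕜 := ℝ) 1 x
  have h2 := hasFDerivAt_apply (𝕜 := ℝ) 2 x
  have hz := (((hasFDerivAt_const (1 : ℝ) x).sub h0).sub h1).sub h2
  refine hasFDerivAt_pi'' fun i => ?_
  fin_cases i
  · refine (((((((h0.const_mul (-α)).sub ((h0.const_mul (β * (1 - ξ))).mul h1)).sub
      ((h0.const_mul (β * ξ)).mul hz)).add (hz.const_mul (ε + μ))).add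
      (h2.const_mul (δ + μ))).add (h1.const_mul μs))).congr_fderiv ?_
    ext v
    simp [opioidFieldJacobian, dotProduct, Fin.sum_univ_three]
    ring
  · refine ((((((hz.const_mul γ).add (h2.const_mul σ)).add
      ((h0.const_mul (β * (1 - ξ))).mul h1)).add ((h0.const_mul (β * ξ)).mul hz)).add
      ((h2.const_mul ν).mul h1)).sub (h1.const_mul (ζ + μs))).congr_fderiv ?_
    ext v
    simp [opioidFieldJacobian, dotProduct, Fin.sum_univ_three]
    ring
  · refine (((h1.const_mul ζ).sub ((h2.const_mul μ).mul h1)).sub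
      (h2.const_mul (δ + σ + μ))).congr_fderiv ?_
    ext v
    simp [opioidFieldJacobian, dotProduct, Fin.sum_univ_three]
    ring

end OpioidField

theorem opioidFieldJacobian_addictionFree (α β ε δ μ μs ζ ν σ : ℝ) :
    opioidFieldJacobian α β 0 ε δ μ μs 0 ζ ν σ ![(ε + μ) / (α + ε + μ), 0, 0] =
      opioidJacobian α β ε δ μ μs ζ σ := by
  ext i j
  fin_cases i <;> fin_cases j <;> simp [opioidFieldJacobian, opioidJacobian] <;> ring

theorem opioid_jacobian_at_addiction_free_general (α β ξ ε δ μ μs γ ζ ν σ : ℝ)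
    (hγ : γ = 0) (hξ : ξ = 0) :
    HasFDerivAt (opioidField α β ξ ε δ μ μs γ ζ ν σ)
      (LinearMap.toContinuousLinearMap
        (Matrix.toLin' (opioidJacobian α β ε δ μ μs ζ σ)))
      ![(ε + μ) / (α + ε + μ), 0, 0] ∧
    opioidJacobian α β ε δ μ μs ζ σ 1 0 = 0 ∧
    opioidJacobian α β ε δ μ μs ζ σ 2 0 = 0 := by
  subst hγ hξ
  refine ⟨?_, rfl, rfl⟩
  rw [← opioidFieldJacobian_addictionFree α β ε δ μ μs ζ ν σ]
  exact hasFDerivAt_opioidField ..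

/-- for `γ = 0`, `ξ = 0`, `α + ε + μ ≠ 0`, the map `F` is differentiable at
the addiction-free equilibrium `x* = ((ε+μ)/(α+ε+μ), 0, 0)` with Jacobian matrix
`opioidJacobian`; in particular the `(2,1)` and `(3,1)` entries of the Jacobian vanish. -/
theorem opioid_jacobian_at_addiction_free (α β ξ ε δ μ μs γ ζ ν σ : ℝ)
    (hγ : γ = 0) (hξ : ξ = 0) (h : α + ε + μ ≠ 0) :
    HasFDerivAt (opioidField α β ξ ε δ μ μs γ ζ ν σ)
      (LinearMap.toContinuousLinearMap
        (Matrix.toLin' (opioidJacobian α β ε δ μ μs ζ σ)))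
      ![(ε + μ) / (α + ε + μ), 0, 0] ∧
    opioidJacobian α β ε δ μ μs ζ σ 1 0 = 0 ∧
    opioidJacobian α β ε δ μ μs ζ σ 2 0 = 0 :=
  opioid_jacobian_at_addiction_free_general α β ξ ε δ μ μs γ ζ ν σ hγ hξ
end

section
/- Assume α + ε + μ > 0, δ + σ + μ > 0, β(ε+μ)/(α+ε+μ) < ζ + μ*, and (ζ + μ* - β(ε+μ)/(α+ε+μ))·(δ+σ+μ) > σ·ζ. Then every root in ℂ of the characteristic polynomial of J has strictly negative real part; that is, the addiction-free equilibrium of the linearized prescription opioid epidemic model is (spectrally) asymptotically stable. -/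
/-!
The Jacobian is block upper triangular: its first column vanishes below the diagonal, so its
characteristic polynomial is `(X + (α + ε + μ))` times that of the lower-right `2 × 2` block.
The hypotheses say exactly that this block has negative trace and positive determinant, and by
the degree-two Routh–Hurwitz criterion the roots of `X² - tr · X + det` then lie in the open
left half-plane.
-/

open Matrix Polynomial

theorem Matrix.charpoly_eq_mul_charpoly_submatrix_succ_of_col_zero {R : Type*} [CommRing R]
    {n : ℕ} (M : Matrix (Fin (n + 1)) (Fin (n + 1)) R) (hM : ∀ i : Fin n, M i.succ 0 = 0) :
    M.charpoly = (X - C (M 0 0)) * (M.submatrix Fin.succ Fin.succ).charpoly := by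
  rw [charpoly, det_succ_column_zero, Fin.sum_univ_succ]
  have hsub : M.charmatrix.submatrix Fin.succ Fin.succ =
      (M.submatrix Fin.succ Fin.succ).charmatrix := by
    ext i j
    simp [charmatrix_apply, diagonal_apply]
  simp [hM, charpoly, hsub]

theorem re_neg_of_sq_add_mul_add_eq_zero {p q : ℝ} (hp : 0 < p) (hq : 0 < q) {z : ℂ}
    (hz : z ^ 2 + p * z + q = 0) : z.re < 0 := by
  have hre := congrArg Complex.re hz
  have him := congrArg Complex.im hz
  simp only [pow_two, Complex.add_re, Complex.mul_re, Complex.ofReal_re, Complex.ofReal_im,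
    zero_mul, sub_zero, Complex.zero_re, Complex.add_im, Complex.mul_im, add_zero,
    Complex.zero_im] at hre him
  rcases eq_or_ne z.im 0 with hy | hy
  · by_contra! hx
    rw [hy] at hre
    nlinarith
  · -- the imaginary part of the equation is `Im z * (2 * Re z + p) = 0`
    have : 2 * z.re + p = 0 := by
      apply mul_left_cancel₀ hy
      linear_combination him
    linarith

theorem Matrix.re_neg_of_aeval_charpoly_fin_two_eq_zero (A : Matrix (Fin 2) (Fin 2) ℝ)
    (htr : A.trace < 0) (hdet : 0 < A.det) {z : ℂ} (hz : aeval z A.charpoly = 0) : z.re < 0 := by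
  refine re_neg_of_sq_add_mul_add_eq_zero (neg_pos.mpr htr) hdet ?_
  simpa [charpoly_fin_two, sub_eq_add_neg] using hz

theorem opioidJacobian_submatrix_succ (α β ε δ μ μs ζ σ : ℝ) :
    (opioidJacobian α β ε δ μ μs ζ σ).submatrix Fin.succ Fin.succ =
      !![β * (ε + μ) / (α + ε + μ) - (ζ + μs), σ; ζ, -(δ + σ + μ)] := by
  ext i j
  fin_cases i <;> fin_cases j <;> rfl

/-- under `α + ε + μ > 0`, `δ + σ + μ > 0`,
`β(ε+μ)/(α+ε+μ) < ζ + μ*` and `(ζ + μ* - β(ε+μ)/(α+ε+μ))·(δ+σ+μ) > σ·ζ`,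
every complex root of the characteristic polynomial of the Jacobian `J` has strictly
negative real part, i.e. the addiction-free equilibrium of the linearized model is
(spectrally) asymptotically stable. -/
theorem addiction_free_equilibrium_stable (α β ε δ μ μs ζ σ : ℝ)
    (h1 : 0 < α + ε + μ) (h2 : 0 < δ + σ + μ)
    (h3 : β * (ε + μ) / (α + ε + μ) < ζ + μs)
    (h4 : σ * ζ < (ζ + μs - β * (ε + μ) / (α + ε + μ)) * (δ + σ + μ)) :
    ∀ z : ℂ, aeval z (opioidJacobian α β ε δ μ μs ζ σ).charpoly = 0 → z.re < 0 := by
  intro z hz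
  have hcol : ∀ i : Fin 2, opioidJacobian α β ε δ μ μs ζ σ i.succ 0 = 0 :=
    Fin.forall_fin_two.mpr ⟨rfl, rfl⟩
  rw [charpoly_eq_mul_charpoly_submatrix_succ_of_col_zero _ hcol, map_mul, mul_eq_zero,
    opioidJacobian_submatrix_succ] at hz
  rcases hz with hz | hz
  · have : z = -(α + ε + μ : ℝ) := by simpa [opioidJacobian, sub_eq_zero] using hz
    rw [this, Complex.neg_re, Complex.ofReal_re]
    linarith
  · refine re_neg_of_aeval_charpoly_fin_two_eq_zero _ ?_ ?_ hz
    · rw [trace_fin_two_of]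
      linarith
    · rw [det_fin_two_of]
      linarith
end

section
/- Let A ∈ ℝ^{3×3}, B̃ ∈ ℝ^{3×2}, γ̃ > 0, let P ∈ ℝ^{3×3} be symmetric satisfying AᵀP + PA + I - (1/γ̃)·P B̃ B̃ᵀ P = 0, and set K = -(1/γ̃)·B̃ᵀP. Let x : ℝ → ℝ³ be differentiable with x'(t) = (A + B̃K)·x(t) for all t ≥ 0. Then for every c ≥ 0, the sublevel set {y ∈ ℝ³ : yᵀPy ≤ c} is forward invariant: if x(0)ᵀPx(0) ≤ c, then x(t)ᵀPx(t) ≤ c for all t ≥ 0. -/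
open Matrix

/-! For the closed loop `M = A + B̃K`, the Riccati equation rewrites the Lyapunov expression
`MᵀP + PM` as `-(I + (1/γ̃)(B̃ᵀP)ᵀ(B̃ᵀP))`, which is negative semidefinite. Hence
`V(t) = x(t)ᵀPx(t)` has `V' = xᵀ(MᵀP + PM)x ≤ 0` on `t ≥ 0`, so `V` is antitone there. -/

variable {n : Type*} [Fintype n]

theorem HasDerivAt.const_mulVec {P : Matrix n n ℝ} {x : ℝ → n → ℝ} {v : n → ℝ}
    {t : ℝ} (h : HasDerivAt x v t) : HasDerivAt (fun s => P *ᵥ x s) (P *ᵥ v) t :=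
  hasDerivAt_pi.2 fun i =>
    HasDerivAt.fun_sum fun j _ => (hasDerivAt_pi.1 h j).const_mul (P i j)

theorem HasDerivAt.dotProduct {x y : ℝ → n → ℝ} {v w : n → ℝ} {t : ℝ}
    (hx : HasDerivAt x v t) (hy : HasDerivAt y w t) :
    HasDerivAt (fun s => x s ⬝ᵥ y s) (v ⬝ᵥ y t + x t ⬝ᵥ w) t := by
  have h : HasDerivAt (fun s => ∑ i, x s i * y s i) (∑ i, (v i * y t i + x t i * w i)) t :=
    HasDerivAt.fun_sum fun i _ => (hasDerivAt_pi.1 hx i).mul (hasDerivAt_pi.1 hy i)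
  rw [Finset.sum_add_distrib] at h
  exact h

theorem HasDerivAt.dotProduct_mulVec_of_linear {M P : Matrix n n ℝ} {x : ℝ → n → ℝ}
    {t : ℝ} (h : HasDerivAt x (M *ᵥ x t) t) :
    HasDerivAt (fun s => x s ⬝ᵥ P *ᵥ x s) (x t ⬝ᵥ (Mᵀ * P + P * M) *ᵥ x t) t := by
  convert h.dotProduct h.const_mulVec using 1
  rw [add_mulVec, dotProduct_add, ← mulVec_mulVec, ← mulVec_mulVec, dotProduct_mulVec,
    vecMul_transpose, dotProduct_comm]

theorem antitoneOn_dotProduct_mulVec_of_lyapunov {M P : Matrix n n ℝ}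
    (hMP : (-(Mᵀ * P + P * M)).PosSemidef) {x : ℝ → n → ℝ}
    (hx : ∀ t, 0 ≤ t → HasDerivAt x (M *ᵥ x t) t) :
    AntitoneOn (fun s => x s ⬝ᵥ P *ᵥ x s) (Set.Ici 0) := by
  have hderiv t (ht : t ∈ Set.Ici (0 : ℝ)) := (hx t ht).dotProduct_mulVec_of_linear (P := P)
  refine antitoneOn_of_hasDerivWithinAt_nonpos (convex_Ici 0)
    (fun t ht => (hderiv t ht).continuousAt.continuousWithinAt)
    (fun t ht => (hderiv t (interior_subset ht)).hasDerivWithinAt) fun t _ => ?_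
  have hnonneg := hMP.dotProduct_mulVec_nonneg (x t)
  rwa [star_trivial, neg_mulVec, dotProduct_neg, neg_nonneg] at hnonneg

section ClosedLoop

variable {m : Type*} [Fintype m]

noncomputable def riccatiClosedLoop (A P : Matrix n n ℝ) (B : Matrix n m ℝ) (γ : ℝ) :
    Matrix n n ℝ :=
  A + B * (-(1 / γ) • (Bᵀ * P))

theorem riccatiClosedLoop_lyapunov_eq [DecidableEq n] {A P : Matrix n n ℝ} {B : Matrix n m ℝ}
    {γ : ℝ} (hric : Aᵀ * P + P * A + 1 - (1 / γ) • (P * B * Bᵀ * P) = 0) :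
    -((riccatiClosedLoop A P B γ)ᵀ * P + P * riccatiClosedLoop A P B γ) =
      1 + (1 / γ) • ((Bᵀ * P)ᴴ * (Bᵀ * P)) := by
  simp only [riccatiClosedLoop, transpose_add, transpose_mul, transpose_smul,
    transpose_transpose, conjTranspose_eq_transpose_of_trivial, Matrix.add_mul, Matrix.mul_add,
    Matrix.smul_mul, Matrix.mul_smul, Matrix.mul_assoc] at hric ⊢
  linear_combination (norm := module) -hric

theorem riccatiClosedLoop_lyapunov_posSemidef [DecidableEq n] {A P : Matrix n n ℝ}
    {B : Matrix n m ℝ} {γ : ℝ} (hγ : 0 ≤ γ)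
    (hric : Aᵀ * P + P * A + 1 - (1 / γ) • (P * B * Bᵀ * P) = 0) :
    (-((riccatiClosedLoop A P B γ)ᵀ * P + P * riccatiClosedLoop A P B γ)).PosSemidef := by
  rw [riccatiClosedLoop_lyapunov_eq hric]
  exact PosSemidef.one.add ((posSemidef_conjTranspose_mul_self _).smul (by positivity))

end ClosedLoop

theorem riccati_sublevel_forward_invariant_general (A P : Matrix (Fin 3) (Fin 3) ℝ)
    (B : Matrix (Fin 3) (Fin 2) ℝ) (γ : ℝ) (hγ : 0 < γ)
    (hric : Aᵀ * P + P * A + 1 - (1 / γ) • (P * B * Bᵀ * P) = 0)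
    (x : ℝ → Fin 3 → ℝ)
    (hx : ∀ t : ℝ, 0 ≤ t →
      HasDerivAt x ((A + B * (-(1 / γ) • (Bᵀ * P))).mulVec (x t)) t) :
    ∀ c : ℝ, 0 ≤ c → x 0 ⬝ᵥ P.mulVec (x 0) ≤ c →
      ∀ t : ℝ, 0 ≤ t → x t ⬝ᵥ P.mulVec (x t) ≤ c := by
  intro c _ h0 t ht
  have hdecay := antitoneOn_dotProduct_mulVec_of_lyapunov
    (riccatiClosedLoop_lyapunov_posSemidef hγ.le hric) hx
  exact (hdecay Set.self_mem_Ici ht ht).trans h0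

/-- let `P = Pᵀ` solve the Riccati equation
`AᵀP + PA + I - (1/γ̃)·P B̃ B̃ᵀ P = 0` with `γ̃ > 0`, `K = -(1/γ̃)·B̃ᵀP`, and let
`x : ℝ → ℝ³` be differentiable with `x' = (A + B̃K) x` for all `t ≥ 0`. Then for every
`c ≥ 0` the sublevel set `{y : yᵀPy ≤ c}` of the quadratic form is forward invariant
along `x`: if `x(0)ᵀPx(0) ≤ c` then `x(t)ᵀPx(t) ≤ c` for all `t ≥ 0`. -/
theorem riccati_sublevel_forward_invariant (A P : Matrix (Fin 3) (Fin 3) ℝ)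
    (B : Matrix (Fin 3) (Fin 2) ℝ) (γ : ℝ) (hγ : 0 < γ)
    (hP : Pᵀ = P)
    (hric : Aᵀ * P + P * A + 1 - (1 / γ) • (P * B * Bᵀ * P) = 0)
    (x : ℝ → Fin 3 → ℝ) (hdiff : Differentiable ℝ x)
    (hx : ∀ t : ℝ, 0 ≤ t →
      HasDerivAt x ((A + B * (-(1 / γ) • (Bᵀ * P))).mulVec (x t)) t) :
    ∀ c : ℝ, 0 ≤ c → x 0 ⬝ᵥ P.mulVec (x 0) ≤ c →
      ∀ t : ℝ, 0 ≤ t → x t ⬝ᵥ P.mulVec (x t) ≤ c :=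
  riccati_sublevel_forward_invariant_general A P B γ hγ hric x hx
end

section
/- Let A = J and let B̃ be the 3×2 real matrix with rows (b₁, 0), (0, 0), (0, b₂). If b₁ ≠ 0, b₂ ≠ 0 and σ ≠ 0, then the pair (A, B̃) is controllable: the 3×6 controllability matrix [ B̃ | A·B̃ | A²·B̃ ] has rank 3. -/
open Matrix

/-- The 3×6 controllability matrix of a pair `(A, B̃)`, with column blocks
`B̃`, `A·B̃`, `A²·B̃` (columns indexed by `Fin 3 × Fin 2`). -/
noncomputable def ctrbMatrix (A : Matrix (Fin 3) (Fin 3) ℝ)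
    (B : Matrix (Fin 3) (Fin 2) ℝ) : Matrix (Fin 3) (Fin 3 × Fin 2) ℝ :=
  fun i p => (A ^ (p.1 : ℕ) * B) i p.2

theorem Matrix.rank_eq_card_of_det_submatrix_ne_zero {K m n : Type*} [Field K] [Fintype m]
    [DecidableEq m] [Fintype n] (M : Matrix m n K) (c : m → n)
    (hc : (M.submatrix id c).det ≠ 0) : M.rank = Fintype.card m := by
  refine le_antisymm M.rank_le_card_height ?_
  calc Fintype.card m = (M.submatrix id c).rank :=
        (rank_of_isUnit _ ((isUnit_iff_isUnit_det _).mpr hc.isUnit)).symm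
    _ ≤ M.rank := rank_submatrix_le M id c

/-- The columns `B̃ e₀ = b₁ e₀`, `B̃ e₁ = b₂ e₂` and `A B̃ e₁ = b₂ A e₂` already span `ℝ³`
as soon as `A₁₂ ≠ 0`. -/
theorem ctrbMatrix_rank_eq_three (A : Matrix (Fin 3) (Fin 3) ℝ) {b₁ b₂ : ℝ}
    (hb₁ : b₁ ≠ 0) (hb₂ : b₂ ≠ 0) (hA : A 1 2 ≠ 0) :
    (ctrbMatrix A !![b₁, 0; 0, 0; 0, b₂]).rank = 3 := by
  have hcols : (ctrbMatrix A !![b₁, 0; 0, 0; 0, b₂]).submatrix id ![(0, 0), (0, 1), (1, 1)] =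
      !![b₁, 0, A 0 2 * b₂; 0, 0, A 1 2 * b₂; 0, b₂, A 2 2 * b₂] := by
    ext i j
    fin_cases i <;> fin_cases j <;> simp [ctrbMatrix, mul_apply, Fin.sum_univ_three]
  have hdet : (!![b₁, 0, A 0 2 * b₂; 0, 0, A 1 2 * b₂; 0, b₂, A 2 2 * b₂]).det
      = -(b₁ * A 1 2 * b₂ ^ 2) := by
    rw [det_fin_three]
    simp only [of_apply, cons_val', cons_val_zero, cons_val_one, cons_val_two, empty_val',
      cons_val_fin_one, head_cons, tail_cons, head_fin_const]
    ring
  refine (rank_eq_card_of_det_submatrix_ne_zero _ ![(0, 0), (0, 1), (1, 1)] ?_).trans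
    (Fintype.card_fin 3)
  rw [hcols, hdet]
  simp [hb₁, hb₂, hA]

theorem opioid_pair_controllable_general (α β ε δ μ μs ζ σ b₁ b₂ : ℝ)
    (hb₁ : b₁ ≠ 0) (hb₂ : b₂ ≠ 0) (hσ : σ ≠ 0) :
    (ctrbMatrix (opioidJacobian α β ε δ μ μs ζ σ)
      !![b₁, 0; 0, 0; 0, b₂]).rank = 3 :=
  ctrbMatrix_rank_eq_three _ hb₁ hb₂ (by simpa [opioidJacobian] using hσ)

/-- with `A = J` and `B̃` the 3×2 matrix with rows `(b₁,0), (0,0), (0,b₂)`,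
if `b₁ ≠ 0`, `b₂ ≠ 0` and `σ ≠ 0`, then the pair `(A, B̃)` is controllable: the
controllability matrix `[B̃ | A·B̃ | A²·B̃]` has rank 3. -/
theorem opioid_pair_controllable (α β ε δ μ μs ζ σ b₁ b₂ : ℝ)
    (h : α + ε + μ ≠ 0) (hb₁ : b₁ ≠ 0) (hb₂ : b₂ ≠ 0) (hσ : σ ≠ 0) :
    (ctrbMatrix (opioidJacobian α β ε δ μ μs ζ σ)
      !![b₁, 0; 0, 0; 0, b₂]).rank = 3 :=
  opioid_pair_controllable_general α β ε δ μ μs ζ σ b₁ b₂ hb₁ hb₂ hσ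
end
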